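/- arXiv:2603.17377 — 2 statements merged into one kernel-verified Lean document; each statement's English description precedes it below -/
import Mathlib

section
/- If s_1, ..., s_{n+1} are exchangeable real-valued random variables and q̂ is the ⌈(1-α)(n+1)⌉-th smallest value among s_1, ..., s_n, then P(s_{n+1} ≤ q̂) ≥ 1 - α. -/
/-!
Let `k = ⌈(1 - α)(n + 1)⌉` and call the strict rank of `s j` the number of `s i` lying strictly
below it. Then `s_{n+1} ≤ q̂` exactly when the strict rank of `s_{n+1}` among all `n + 1` scores is
at most `k - 1`. Whatever the outcome, at least `k` of the `n + 1` scores have strict rank at most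
`k - 1` (ties only lower ranks), so these events have expected count at least `k`; by
exchangeability they all have the same probability, which is therefore at least
`k / (n + 1) ≥ 1 - α`.
-/

open Finset MeasureTheory
open scoped ENNReal

section Rank

variable {ι κ α : Type*} [Fintype ι] [Fintype κ] [LinearOrder α]

def strictRank (v : ι → α) (j : ι) : ℕ := #{i | v i < v j}

lemma card_filter_comp_equiv (e : κ ≃ ι) (p : ι → Prop) [DecidablePred p] :
    #{k | p (e k)} = #{i | p i} := by
  simp only [card_filter]
  exact e.sum_comp fun i => if p i then 1 else 0

lemma strictRank_comp_equiv (v : ι → α) (e : κ ≃ ι) (k : κ) :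
    strictRank (v ∘ e) k = strictRank v (e k) :=
  card_filter_comp_equiv e (fun i => v i < v (e k))

lemma card_filter_lt_le_iff_le_of_monotone {n : ℕ} {g : Fin n → α} (hg : Monotone g)
    (k : Fin n) (t : α) : #{i | g i < t} ≤ k ↔ t ≤ g k := by
  rw [← not_lt, Tuple.lt_card_lt_iff_apply_lt_of_monotone hg, not_lt]

lemma strictRank_le_of_monotone {n : ℕ} {g : Fin n → α} (hg : Monotone g) (k : Fin n) :
    strictRank g k ≤ k :=
  (card_filter_lt_le_iff_le_of_monotone hg k (g k)).2 le_rfl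

lemma le_card_filter_strictRank_le (v : ι → α) {m : ℕ} (hm : m < Fintype.card ι) :
    m + 1 ≤ #{j | strictRank v j ≤ m} := by
  set e := (Fintype.equivFin ι).symm
  set σ := Tuple.sort (v ∘ e)
  set m' : Fin (Fintype.card ι) := ⟨m, hm⟩
  calc m + 1 = #(Iic m') := (Fin.card_Iic m').symm
    _ = #((Iic m').map (σ.trans e).toEmbedding) := (card_map _).symm
    _ ≤ #{j | strictRank v j ≤ m} := card_le_card fun j hj => ?_
  obtain ⟨k, hk, rfl⟩ := mem_map.1 hj
  have hrank : strictRank v (e (σ k)) ≤ k := by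
    rw [← strictRank_comp_equiv v e, ← strictRank_comp_equiv (v ∘ e) σ]
    exact strictRank_le_of_monotone (Tuple.monotone_sort _) k
  simpa using hrank.trans (Fin.le_iff_val_le_val.1 (mem_Iic.1 hk))

end Rank

section OrderStatistic

variable {α : Type*} [LinearOrder α]

lemma sort_coe_ofFn {n : ℕ} (w : Fin n → α) :
    (↑(List.ofFn w) : Multiset α).sort (· ≤ ·) = List.ofFn (w ∘ Tuple.sort w) := by
  refine List.Perm.eq_of_sortedLE ?_ ?_ ?_
  · exact List.sortedLE_iff_pairwise.2 (Multiset.pairwise_sort _ _)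
  · exact List.sortedLE_ofFn_iff.2 (Tuple.monotone_sort w)
  · rw [← Multiset.coe_eq_coe, Multiset.sort_eq]
    exact Multiset.coe_eq_coe.2 ((Tuple.sort w).ofFn_comp_perm w).symm

lemma le_getD_sort_coe_ofFn_iff {n : ℕ} (w : Fin n → α) {m : ℕ} (hm : m < n) (t d : α) :
    t ≤ ((↑(List.ofFn w) : Multiset α).sort (· ≤ ·)).getD m d ↔ #{i | w i < t} ≤ m := by
  rw [sort_coe_ofFn, List.getD_eq_getElem _ _ (by simpa using hm), List.getElem_ofFn,
    ← card_filter_comp_equiv (Tuple.sort w)]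
  exact (card_filter_lt_le_iff_le_of_monotone (Tuple.monotone_sort w) ⟨m, hm⟩ t).symm

lemma le_getD_sort_coe_ofFn_castSucc_iff {n : ℕ} (v : Fin (n + 1) → α) {m : ℕ} (hm : m < n)
    (d : α) :
    v (Fin.last n) ≤
        ((↑(List.ofFn fun i : Fin n => v i.castSucc) : Multiset α).sort (· ≤ ·)).getD m d ↔
      strictRank v (Fin.last n) ≤ m := by
  rw [le_getD_sort_coe_ofFn_iff _ hm, strictRank, card_filter, card_filter, Fin.sum_univ_castSucc]
  simp

end OrderStatistic

section Exchangeable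

variable {Ω ι : Type*} [MeasurableSpace Ω] [Fintype ι]

def Exchangeable {α : Type*} [MeasurableSpace α] (μ : Measure Ω) (s : ι → Ω → α) : Prop :=
  ∀ σ : Equiv.Perm ι,
    Measure.map (fun ω => fun i => s (σ i) ω) μ = Measure.map (fun ω => fun i => s i ω) μ

lemma natCast_mul_measure_univ_le_sum {A : ι → Set Ω} [∀ i, DecidablePred (· ∈ A i)]
    (μ : Measure Ω) (hA : ∀ i, MeasurableSet (A i)) {k : ℕ} (hk : ∀ ω, k ≤ #{i | ω ∈ A i}) :
    k * μ Set.univ ≤ ∑ i, μ (A i) := by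
  calc (k : ℝ≥0∞) * μ Set.univ = ∫⁻ _, (k : ℝ≥0∞) ∂μ := (lintegral_const _).symm
    _ ≤ ∫⁻ ω, ∑ i, (A i).indicator 1 ω ∂μ := lintegral_mono fun ω => by
      simp only [Set.indicator_apply, Pi.one_apply, sum_boole]
      exact_mod_cast hk ω
    _ = ∑ i, μ (A i) := by
      rw [lintegral_finsetSum _ fun i _ => measurable_one.indicator (hA i)]
      exact sum_congr rfl fun i _ => lintegral_indicator_one (hA i)

variable {α : Type*} [TopologicalSpace α] [LinearOrder α] [OrderClosedTopology α]
  [SecondCountableTopology α] [MeasurableSpace α] [OpensMeasurableSpace α]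

lemma measurable_strictRank (j : ι) : Measurable fun v : ι → α => strictRank v j := by
  simp only [strictRank, card_filter]
  exact Finset.measurable_sum _ fun i _ => Measurable.ite
    (measurableSet_lt (measurable_pi_apply i) (measurable_pi_apply j)) measurable_const
    measurable_const

lemma Exchangeable.measure_strictRank_le_eq {μ : Measure Ω} {s : ι → Ω → α}
    (hs : ∀ i, Measurable (s i)) (hexch : Exchangeable μ s) (m : ℕ) (j j' : ι) :
    μ {ω | strictRank (fun i => s i ω) j ≤ m} = μ {ω | strictRank (fun i => s i ω) j' ≤ m} := by
  classical
  set B := {v : ι → α | strictRank v j ≤ m}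
  have hB : MeasurableSet B := measurable_strictRank j (measurableSet_Iic (a := m))
  have hswap : ∀ ω, strictRank (fun i => s (Equiv.swap j j' i) ω) j =
      strictRank (fun i => s i ω) j' :=
    fun ω => (strictRank_comp_equiv (fun i => s i ω) (Equiv.swap j j') j).trans (by simp)
  have hmap := congrArg (fun ν : Measure (ι → α) => ν B) (hexch (Equiv.swap j j'))
  rw [Measure.map_apply (measurable_pi_lambda _ fun i => hs _) hB,
    Measure.map_apply (measurable_pi_lambda _ hs) hB] at hmap
  simp only [B, Set.preimage_ofPred_eq, hswap] at hmap
  exact hmap.symm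

lemma Exchangeable.le_card_mul_measure_strictRank_le {μ : Measure Ω} [IsProbabilityMeasure μ]
    {s : ι → Ω → α} (hs : ∀ i, Measurable (s i)) (hexch : Exchangeable μ s) {m : ℕ}
    (hm : m < Fintype.card ι) (j : ι) :
    (m + 1 : ℝ≥0∞) ≤ Fintype.card ι * μ {ω | strictRank (fun i => s i ω) j ≤ m} := by
  have hA : ∀ i, MeasurableSet {ω | strictRank (fun i => s i ω) i ≤ m} := fun i =>
    (measurable_strictRank i).comp (measurable_pi_lambda _ hs) (measurableSet_Iic (a := m))
  calc (m + 1 : ℝ≥0∞) = ((m + 1 : ℕ) : ℝ≥0∞) * μ Set.univ := by simp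
    _ ≤ ∑ i, μ {ω | strictRank (fun i => s i ω) i ≤ m} :=
      natCast_mul_measure_univ_le_sum μ hA fun ω =>
        le_card_filter_strictRank_le (fun i => s i ω) hm
    _ = Fintype.card ι * μ {ω | strictRank (fun i => s i ω) j ≤ m} := by
      simp [hexch.measure_strictRank_le_eq hs m _ j]

end Exchangeable

theorem split_conformal_coverage_lower_bound_general
    {Ω : Type*} [MeasurableSpace Ω] (μ : Measure Ω) [IsProbabilityMeasure μ]
    (n : ℕ) (s : Fin (n + 1) → Ω → ℝ)
    (hmeas : ∀ i, Measurable (s i))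
    (hexch : ∀ σ : Equiv.Perm (Fin (n + 1)),
      Measure.map (fun ω => fun i => s (σ i) ω) μ =
        Measure.map (fun ω => fun i => s i ω) μ)
    (α : ℝ)
    (hk : (1 - α) * (n + 1 : ℝ) ≤ n)
    (qhat : Ω → ℝ)
    (hqhat : ∀ ω, qhat ω =
      (((List.ofFn fun i : Fin n => s i.castSucc ω) : Multiset ℝ).sort (· ≤ ·)).getD
        (⌈(1 - α) * (n + 1 : ℝ)⌉₊ - 1) 0) :
    ENNReal.ofReal (1 - α) ≤ μ {ω | s (Fin.last n) ω ≤ qhat ω} := by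
  rcases le_or_gt (1 - α) 0 with hα | hα
  · simp [ENNReal.ofReal_of_nonpos hα]
  set k := ⌈(1 - α) * (n + 1 : ℝ)⌉₊
  have hk0 : 0 < k := Nat.ceil_pos.2 (by positivity)
  have hkn : k ≤ n := Nat.ceil_le.2 hk
  have hevent : {ω | s (Fin.last n) ω ≤ qhat ω} =
      {ω | strictRank (fun i => s i ω) (Fin.last n) ≤ k - 1} := by
    ext ω
    rw [Set.mem_ofPred_eq, hqhat]
    exact le_getD_sort_coe_ofFn_castSucc_iff (fun i => s i ω) (by omega) 0
  have hcover := Exchangeable.le_card_mul_measure_strictRank_le hmeas hexch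
    (m := k - 1) (by rw [Fintype.card_fin]; omega) (Fin.last n)
  have hceil : ENNReal.ofReal (1 - α) * (n + 1 : ℕ) ≤ k := by
    rw [← ENNReal.ofReal_natCast, ← ENNReal.ofReal_natCast, ← ENNReal.ofReal_mul' (by positivity)]
    exact ENNReal.ofReal_le_ofReal (by simpa using Nat.le_ceil _)
  rw [hevent, ← ENNReal.mul_le_mul_iff_right (a := ((n + 1 : ℕ) : ℝ≥0∞)) (by simp) (by simp)]
  calc ((n + 1 : ℕ) : ℝ≥0∞) * ENNReal.ofReal (1 - α) ≤ k := by rwa [mul_comm]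
    _ = (k - 1 : ℕ) + 1 := by norm_cast; omega
    _ ≤ _ := by simpa using hcover

/-- Split conformal prediction coverage lower bound:
if `s 0, ..., s n` (that is, `n+1` variables) are exchangeable and `q̂` is the
`⌈(1-α)(n+1)⌉`-th smallest value among the first `n` of them, then
`P(s_{n+1} ≤ q̂) ≥ 1 - α`. -/
theorem split_conformal_coverage_lower_bound
    {Ω : Type*} [MeasurableSpace Ω] (μ : Measure Ω) [IsProbabilityMeasure μ]
    (n : ℕ) (s : Fin (n + 1) → Ω → ℝ)
    (hmeas : ∀ i, Measurable (s i))
    (hexch : ∀ σ : Equiv.Perm (Fin (n + 1)),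
      Measure.map (fun ω => fun i => s (σ i) ω) μ =
        Measure.map (fun ω => fun i => s i ω) μ)
    (α : ℝ) (hα : α ∈ Set.Ioo (0 : ℝ) 1)
    (hk : (1 - α) * (n + 1 : ℝ) ≤ n)
    (qhat : Ω → ℝ)
    (hqhat : ∀ ω, qhat ω =
      (((List.ofFn fun i : Fin n => s i.castSucc ω) : Multiset ℝ).sort (· ≤ ·)).getD
        (⌈(1 - α) * (n + 1 : ℝ)⌉₊ - 1) 0) :
    ENNReal.ofReal (1 - α) ≤ μ {ω | s (Fin.last n) ω ≤ qhat ω} :=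
  split_conformal_coverage_lower_bound_general μ n s hmeas hexch α hk qhat hqhat
end

section
/- Let s_1, ..., s_{n+1} be exchangeable random variables with almost surely no ties. Then the rank of s_{n+1} among all n+1 values is uniformly distributed on {1, ..., n+1}, and consequently P(s_{n+1} ≤ q̂) ≤ 1 - α + 1/(n+1), where q̂ is the ⌈(1-α)(n+1)⌉-th smallest of s_1, ..., s_n. -/
open MeasureTheory
open scoped ENNReal

/-!
Off a null set the scores are pairwise distinct, and then their ranks are a permutation of
`1, …, n + 1`: for each `k` exactly one index has rank `k`, so `∑ j, P(rank of s j = k) = 1`.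
Permuting the coordinates permutes the ranks, so by exchangeability these probabilities do not
depend on `j` and each equals `1 / (n + 1)`. If `s (last n) ≤ q̂`, the `q`-th smallest calibration
score with `q = ⌈(1 - α)(n + 1)⌉`, then fewer than `q` calibration scores lie below `s (last n)`,
so its rank is at most `q`: an event of probability `q / (n + 1) ≤ 1 - α + 1 / (n + 1)`.
-/

namespace SplitConformal

open Finset Function

section Rank

variable {ι α : Type*} [Fintype ι] [LinearOrder α]

def rankAt (v : ι → α) (j : ι) : ℕ := #{i | v i ≤ v j}

lemma one_le_rankAt (v : ι → α) (j : ι) : 1 ≤ rankAt v j :=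
  card_pos.2 ⟨j, mem_filter.2 ⟨mem_univ j, le_rfl⟩⟩

lemma rankAt_le_card (v : ι → α) (j : ι) : rankAt v j ≤ Fintype.card ι :=
  card_filter_le _ _

lemma rankAt_lt_rankAt {v : ι → α} {j j' : ι} (h : v j < v j') : rankAt v j < rankAt v j' := by
  have hsub : (univ.filter fun i => v i ≤ v j) ⊆ univ.filter fun i => v i ≤ v j' :=
    monotone_filter_right _ fun _ _ hi => hi.trans h.le
  refine card_lt_card ((ssubset_iff_of_subset hsub).2 ⟨j', ?_, ?_⟩) <;> simp [h]

lemma le_of_rankAt_le {v : ι → α} {j j' : ι} (h : rankAt v j ≤ rankAt v j') : v j ≤ v j' :=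
  not_lt.1 fun hlt => (rankAt_lt_rankAt hlt).not_ge h

lemma rankAt_injective {v : ι → α} (hv : Injective v) : Injective (rankAt v) :=
  fun _ _ h => hv (le_antisymm (le_of_rankAt_le h.le) (le_of_rankAt_le h.ge))

lemma exists_rankAt_eq {v : ι → α} (hv : Injective v) {k : ℕ}
    (hk : k ∈ Icc 1 (Fintype.card ι)) : ∃ j, rankAt v j = k := by
  obtain ⟨j, -, hj⟩ := surj_on_of_inj_on_of_card_le (s := univ) (fun j _ => rankAt v j)
    (fun j _ => mem_Icc.2 ⟨one_le_rankAt v j, rankAt_le_card v j⟩)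
    (fun _ _ _ _ h => rankAt_injective hv h) (by simp) k hk
  exact ⟨j, hj.symm⟩

lemma rankAt_comp_perm (v : ι → α) (σ : Equiv.Perm ι) (j : ι) :
    rankAt (fun i => v (σ i)) j = rankAt v (σ j) :=
  card_equiv σ (by simp)

lemma rankAt_last {n : ℕ} (v : Fin (n + 1) → α) :
    rankAt v (Fin.last n) = #{i : Fin n | v i.castSucc ≤ v (Fin.last n)} + 1 := by
  rw [rankAt, card_filter, Fin.sum_univ_castSucc, card_filter, if_pos le_rfl]

end Rank

lemma _root_.List.Pairwise.countP_lt_le_of_le_getElem {α : Type*} [LinearOrder α] {l : List α}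
    (hl : l.Pairwise (· ≤ ·)) {k : ℕ} (hk : k < l.length) {x : α} (hx : x ≤ l[k]) :
    l.countP (fun y => decide (y < x)) ≤ k := by
  have hdrop : (l.drop k).countP (fun y => decide (y < x)) = 0 := by
    have hsorted := hl.drop (i := k)
    rw [List.drop_eq_getElem_cons hk, List.pairwise_cons] at hsorted
    rw [List.countP_eq_zero, List.drop_eq_getElem_cons hk]
    intro y hy
    simp only [decide_eq_true_eq, not_lt]
    rcases List.mem_cons.1 hy with rfl | hy
    · exact hx
    · exact hx.trans (hsorted.1 y hy)
  conv_lhs => rw [← List.take_append_drop k l]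
  rw [List.countP_append, hdrop, add_zero]
  exact List.countP_le_length.trans (by simp)

lemma card_lt_le_of_le_sort_getD {α : Type*} [LinearOrder α] {n : ℕ} (f : Fin n → α) {k : ℕ}
    (hk : k < n) {x d : α} (hx : x ≤ ((List.ofFn f : Multiset α).sort (· ≤ ·)).getD k d) :
    #{i | f i < x} ≤ k := by
  set l := (List.ofFn f : Multiset α).sort (· ≤ ·)
  have hlen : k < l.length := by simpa [l] using hk
  have hcount : l.countP (fun y => decide (y < x)) = #{i | f i < x} := by
    rw [← Multiset.coe_countP, Multiset.sort_eq, ← Fin.univ_val_map, Multiset.countP_map]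
    rfl
  rw [← hcount]
  rw [List.getD_eq_getElem _ _ hlen] at hx
  exact (Multiset.pairwise_sort _ _).countP_lt_le_of_le_getElem hlen hx

lemma rankAt_last_le_of_le_sort_getD {α : Type*} [LinearOrder α] {n : ℕ} {v : Fin (n + 1) → α}
    (hv : Injective v) {k : ℕ} (hk : k < n) {d : α}
    (hx : v (Fin.last n) ≤
      ((List.ofFn fun i : Fin n => v i.castSucc : Multiset α).sort (· ≤ ·)).getD k d) :
    rankAt v (Fin.last n) ≤ k + 1 := by
  have hlt : ∀ i : Fin n, v i.castSucc ≤ v (Fin.last n) ↔ v i.castSucc < v (Fin.last n) :=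
    fun i => (hv.ne (Fin.castSucc_lt_last i).ne).le_iff_lt
  rw [rankAt_last, filter_congr fun i _ => hlt i]
  exact Nat.add_le_add_right (card_lt_le_of_le_sort_getD _ hk hx) 1

section Exchangeable

variable {Ω ι : Type*} [MeasurableSpace Ω]

def Exchangeable {β : Type*} [MeasurableSpace β] (μ : Measure Ω) (X : Ω → ι → β) : Prop :=
  ∀ σ : Equiv.Perm ι, μ.map (fun ω i => X ω (σ i)) = μ.map X

lemma ae_injective_of_measure_eq_zero {β : Type*} [Countable ι] {μ : Measure Ω} {X : Ω → ι → β}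
    (hties : ∀ i j, i ≠ j → μ {ω | X ω i = X ω j} = 0) : ∀ᵐ ω ∂μ, Injective (X ω) := by
  have : ∀ i j, ∀ᵐ ω ∂μ, X ω i = X ω j → i = j := fun i j => by
    by_cases hij : i = j
    · exact Filter.Eventually.of_forall fun _ _ => hij
    · exact ae_iff.2 <| measure_mono_null (fun _ h => (Classical.not_imp.1 h).1) (hties i j hij)
  simpa only [Injective, ae_all_iff] using this

variable [Fintype ι] {μ : Measure Ω} {X : Ω → ι → ℝ}

lemma measurable_rankAt (j : ι) : Measurable fun v : ι → ℝ => rankAt v j := by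
  simp only [rankAt, card_filter]
  exact Finset.measurable_sum _ fun i _ => Measurable.ite
    (measurableSet_le (measurable_pi_apply i) (measurable_pi_apply j)) measurable_const
    measurable_const

lemma measurableSet_rankAt_eq (hX : Measurable X) (j : ι) (k : ℕ) :
    MeasurableSet {ω | rankAt (X ω) j = k} :=
  ((measurable_rankAt j).comp hX) (measurableSet_singleton k)

lemma Exchangeable.measure_rankAt_eq (hexch : Exchangeable μ X) (hX : Measurable X)
    (j j' : ι) (k : ℕ) : μ {ω | rankAt (X ω) j = k} = μ {ω | rankAt (X ω) j' = k} := by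
  classical
  have hB : MeasurableSet {v : ι → ℝ | rankAt v j' = k} :=
    measurable_rankAt j' (measurableSet_singleton k)
  have hXσ : Measurable fun ω i => X ω (Equiv.swap j j' i) :=
    measurable_pi_lambda _ fun i => (measurable_pi_apply _).comp hX
  calc μ {ω | rankAt (X ω) j = k}
      = μ.map (fun ω i => X ω (Equiv.swap j j' i)) {v | rankAt v j' = k} := by
        rw [Measure.map_apply hXσ hB]
        simp only [Set.preimage_ofPred_eq, rankAt_comp_perm, Equiv.swap_apply_right]
    _ = μ.map X {v | rankAt v j' = k} := by rw [hexch]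
    _ = μ {ω | rankAt (X ω) j' = k} := Measure.map_apply hX hB

lemma sum_measure_rankAt_eq_one [IsProbabilityMeasure μ] (hX : Measurable X)
    (hinj : ∀ᵐ ω ∂μ, Injective (X ω)) {k : ℕ} (hk : k ∈ Icc 1 (Fintype.card ι)) :
    ∑ j, μ {ω | rankAt (X ω) j = k} = 1 := by
  have hdisj : Pairwise (AEDisjoint μ on fun j => {ω | rankAt (X ω) j = k}) :=
    fun j j' hjj' => measure_mono_null
      (fun ω hω hinjω => hjj' (rankAt_injective hinjω (hω.1.trans hω.2.symm))) (ae_iff.1 hinj)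
  have hcover : (⋃ j, {ω | rankAt (X ω) j = k}) =ᵐ[μ] Set.univ :=
    ae_eq_univ.2 <| measure_mono_null
      (fun ω hω hinjω => hω (Set.mem_iUnion.2 (exists_rankAt_eq hinjω hk))) (ae_iff.1 hinj)
  calc ∑ j, μ {ω | rankAt (X ω) j = k} = μ (⋃ j, {ω | rankAt (X ω) j = k}) := by
        rw [measure_iUnion₀ hdisj fun j => (measurableSet_rankAt_eq hX j k).nullMeasurableSet,
          tsum_fintype]
    _ = 1 := by rw [measure_congr hcover, measure_univ]

theorem Exchangeable.measure_rankAt_eq_inv_card [IsProbabilityMeasure μ]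
    (hexch : Exchangeable μ X) (hX : Measurable X) (hinj : ∀ᵐ ω ∂μ, Injective (X ω)) {k : ℕ}
    (hk : k ∈ Icc 1 (Fintype.card ι)) (j : ι) :
    μ {ω | rankAt (X ω) j = k} = (Fintype.card ι : ℝ≥0∞)⁻¹ := by
  have hsum : ∑ _j' : ι, μ {ω | rankAt (X ω) j = k} = 1 := by
    rw [← sum_measure_rankAt_eq_one hX hinj hk]
    exact sum_congr rfl fun j' _ => hexch.measure_rankAt_eq hX j j' k
  rw [sum_const, card_univ, nsmul_eq_mul, mul_comm] at hsum
  exact ENNReal.eq_inv_of_mul_eq_one_left hsum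

theorem Exchangeable.measure_rankAt_le [IsProbabilityMeasure μ]
    (hexch : Exchangeable μ X) (hX : Measurable X) (hinj : ∀ᵐ ω ∂μ, Injective (X ω)) {k : ℕ}
    (hk : k ≤ Fintype.card ι) (j : ι) :
    μ {ω | rankAt (X ω) j ≤ k} = k * (Fintype.card ι : ℝ≥0∞)⁻¹ := by
  have hunion : {ω | rankAt (X ω) j ≤ k} = ⋃ m ∈ Icc 1 k, {ω | rankAt (X ω) j = m} := by
    ext ω
    simp [one_le_rankAt]
  rw [hunion, measure_biUnion_finset
    (fun m _ m' _ hmm' => Set.disjoint_left.2 fun _ h h' => hmm' (h.symm.trans h'))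
    fun m _ => measurableSet_rankAt_eq hX j m,
    sum_congr rfl fun m hm =>
      hexch.measure_rankAt_eq_inv_card hX hinj (Icc_subset_Icc_right hk hm) j,
    sum_const, Nat.card_Icc, nsmul_eq_mul, Nat.add_sub_cancel]

end Exchangeable

lemma natCeil_mul_mul_inv_le_ofReal {a : ℝ} (ha : 0 ≤ a) {N : ℕ} (hN : 0 < N) :
    (⌈a * N⌉₊ : ℝ≥0∞) * (N : ℝ≥0∞)⁻¹ ≤ ENNReal.ofReal (a + 1 / N) := by
  have hN' : (0 : ℝ) < N := Nat.cast_pos.2 hN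
  rw [← ENNReal.ofReal_natCast, ← ENNReal.ofReal_natCast N, ← ENNReal.ofReal_inv_of_pos hN',
    ← ENNReal.ofReal_mul (Nat.cast_nonneg _)]
  refine ENNReal.ofReal_le_ofReal ?_
  rw [← div_eq_mul_inv, div_le_iff₀ hN', add_mul, one_div, inv_mul_cancel₀ hN'.ne']
  exact (Nat.ceil_lt_add_one (by positivity)).le

end SplitConformal

open SplitConformal

/-- Split conformal prediction rank uniformity and coverage upper bound:
for exchangeable `s 0, ..., s n` with almost surely no ties, the rank of the
last variable among all `n+1` values is uniform on `{1, ..., n+1}`, and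
`P(s_{n+1} ≤ q̂) ≤ 1 - α + 1/(n+1)` where `q̂` is the `⌈(1-α)(n+1)⌉`-th
smallest of the first `n` values. -/
theorem split_conformal_rank_uniform_and_upper_bound
    {Ω : Type*} [MeasurableSpace Ω] (μ : Measure Ω) [IsProbabilityMeasure μ]
    (n : ℕ) (s : Fin (n + 1) → Ω → ℝ)
    (hmeas : ∀ i, Measurable (s i))
    (hexch : ∀ σ : Equiv.Perm (Fin (n + 1)),
      Measure.map (fun ω => fun i => s (σ i) ω) μ =
        Measure.map (fun ω => fun i => s i ω) μ)
    (hties : ∀ i j : Fin (n + 1), i ≠ j → μ {ω | s i ω = s j ω} = 0)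
    (α : ℝ) (hα : α ∈ Set.Ioo (0 : ℝ) 1)
    (hk : (1 - α) * (n + 1 : ℝ) ≤ n)
    (rank : Ω → ℕ)
    (hrank : ∀ ω, rank ω =
      (Finset.univ.filter fun i : Fin (n + 1) =>
        s i ω ≤ s (Fin.last n) ω).card)
    (qhat : Ω → ℝ)
    (hqhat : ∀ ω, qhat ω =
      (((List.ofFn fun i : Fin n => s i.castSucc ω) : Multiset ℝ).sort (· ≤ ·)).getD
        (⌈(1 - α) * (n + 1 : ℝ)⌉₊ - 1) 0) :
    (∀ k ∈ Finset.Icc 1 (n + 1), μ {ω | rank ω = k} = (n + 1 : ℝ≥0∞)⁻¹) ∧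
      μ {ω | s (Fin.last n) ω ≤ qhat ω} ≤
        ENNReal.ofReal (1 - α + 1 / (n + 1 : ℝ)) := by
  set X : Ω → Fin (n + 1) → ℝ := fun ω i => s i ω
  have hX : Measurable X := measurable_pi_lambda _ hmeas
  have hexch' : Exchangeable μ X := hexch
  have hinj : ∀ᵐ ω ∂μ, Function.Injective (X ω) := ae_injective_of_measure_eq_zero hties
  have hcard : (Fintype.card (Fin (n + 1)) : ℝ≥0∞) = n + 1 := by simp
  set q := ⌈(1 - α) * (n + 1 : ℝ)⌉₊
  have hα' : 0 < 1 - α := sub_pos.2 hα.2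
  have hq_pos : 1 ≤ q := Nat.one_le_ceil_iff.2 (mul_pos hα' (by positivity))
  have hq_le : q ≤ n := Nat.ceil_le.2 hk
  refine ⟨fun k hk_mem => ?_, ?_⟩
  · have h := hexch'.measure_rankAt_eq_inv_card hX hinj (by simpa using hk_mem) (Fin.last n)
    rw [hcard] at h
    simp only [hrank]
    exact h
  have hcover : {ω | s (Fin.last n) ω ≤ qhat ω} ≤ᵐ[μ] {ω | rankAt (X ω) (Fin.last n) ≤ q} := by
    filter_upwards [hinj] with ω hω (hle : s (Fin.last n) ω ≤ qhat ω)
    exact (rankAt_last_le_of_le_sort_getD hω (k := q - 1) (by omega) (by rwa [hqhat] at hle)).trans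
      (by omega)
  calc μ {ω | s (Fin.last n) ω ≤ qhat ω} ≤ μ {ω | rankAt (X ω) (Fin.last n) ≤ q} :=
        measure_mono_ae hcover
    _ = q * (n + 1 : ℝ≥0∞)⁻¹ := by
        rw [hexch'.measure_rankAt_le hX hinj (by simp only [Fintype.card_fin]; omega), hcard]
    _ ≤ ENNReal.ofReal (1 - α + 1 / (n + 1 : ℝ)) := by
        simpa only [Nat.cast_add, Nat.cast_one] using
          natCeil_mul_mul_inv_le_ofReal (N := n + 1) hα'.le n.succ_pos
end
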